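/- Let $f(c,n) := 2^{c-1} n^{1 - 1/2^{c-1}}$. For any $c \ge 2$ partitions $\P_1, \dots, \P_c$ of $[n]$, there exists a partition of $[n]$ into $m < f(c,n)$ base sets $B_1, \dots, B_m$ such that for each $i \in [m]$ there is a permutation $(\P_{i_1}, \dots, \P_{i_c})$ of the given partitions whose restriction to $B_i$ has distance 1. -/

import Mathlib

/-!
A partition is handled through its labeling `x ↦ (P i).part x`. On a block `B` the sequence
has distance 1 as soon as its labelings, in that order, refine one another on `B`; a suitable
order exists whenever the labelings are pairwise comparable under refinement on `B`.

Induction on the number of partitions. Cut `S` along the first labeling: each color with at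
least `√|S|` elements is a block (there are at most `√|S|` of them), and the small colors are cut
into transversals by the rank of an element inside its color (fewer than `√|S|` ranks). On each
of these fewer than `2√|S|` blocks the first labeling is constant or injective, hence comparable
with every other labeling. Recursing on each block with the remaining labelings, concavity of
`z ↦ z ^ (1 - 1/2^m)` bounds the number of blocks by
`2^m (2√n)^(1/2^m) n^(1 - 1/2^m) ≤ 2^(m+1) n^(1 - 1/2^(m+1))`.
-/

/-- The restriction to `B` of the partition sequence `Q` has distance 1: for
every later partition in the sequence, each of its colors (restricted to `B`)
is a union of colors of every earlier partition (restricted to `B`). -/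
def RestrictedDistOne {n : ℕ} (B : Finset (Fin n))
    (Q : List (Finpartition (Finset.univ : Finset (Fin n)))) : Prop :=
  ∀ (i j : Fin Q.length), (j : ℕ) < (i : ℕ) →
    ∀ Y ∈ (Q.get i).parts, ∀ X ∈ (Q.get j).parts,
      ((X ∩ B) ∩ (Y ∩ B)).Nonempty → X ∩ B ⊆ Y ∩ B

open Finset

section Refinement

variable {α β γ δ ι : Type*}

def FactorsThroughOn (B : Finset α) (g : α → γ) (f : α → β) : Prop :=
  ∀ x ∈ B, ∀ y ∈ B, f x = f y → g x = g y

namespace FactorsThroughOn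

variable {B : Finset α} {f : α → β} {g : α → γ} {h : α → δ}

theorem refl (B : Finset α) (f : α → β) : FactorsThroughOn B f f :=
  fun _ _ _ _ hxy => hxy

theorem trans (hhg : FactorsThroughOn B h g) (hgf : FactorsThroughOn B g f) :
    FactorsThroughOn B h f :=
  fun x hx y hy hxy => hhg x hx y hy (hgf x hx y hy hxy)

theorem of_injOn (hf : Set.InjOn f B) : FactorsThroughOn B g f :=
  fun _ hx _ hy hxy => congrArg g (hf hx hy hxy)

theorem of_const (hg : ∀ x ∈ B, ∀ y ∈ B, g x = g y) : FactorsThroughOn B g f :=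
  fun x hx y hy _ => hg x hx y hy

end FactorsThroughOn

def IsRefinementChainOn (B : Finset α) (g : ι → α → β) : Prop :=
  ∀ i j, FactorsThroughOn B (g i) (g j) ∨ FactorsThroughOn B (g j) (g i)

theorem isRefinementChainOn_fin_one (B : Finset α) (g : Fin 1 → α → β) :
    IsRefinementChainOn B g := by
  intro i j
  rw [Subsingleton.elim i j]
  exact .inl (.refl B (g j))

theorem IsRefinementChainOn.fin_cons {m : ℕ} {B : Finset α} {g : Fin (m + 1) → α → β}
    (htail : IsRefinementChainOn B fun i : Fin m => g i.succ)
    (hhead : (∀ x ∈ B, ∀ y ∈ B, g 0 x = g 0 y) ∨ Set.InjOn (g 0) B) :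
    IsRefinementChainOn B g := by
  have head_comparable : ∀ j, FactorsThroughOn B (g 0) (g j) ∨ FactorsThroughOn B (g j) (g 0) :=
    fun j => hhead.imp .of_const .of_injOn
  intro i j
  induction i using Fin.cases with
  | zero => exact head_comparable j
  | succ i =>
    induction j using Fin.cases with
    | zero => exact (head_comparable i.succ).symm
    | succ j => exact htail i j

end Refinement

theorem exists_perm_forall_le_imp_of_total {c : ℕ} {r : Fin c → Fin c → Prop}
    (htotal : ∀ i j, r i j ∨ r j i) (htrans : ∀ i j k, r i j → r j k → r i k) :
    ∃ σ : Equiv.Perm (Fin c), ∀ i j, i ≤ j → r (σ i) (σ j) := by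
  classical
  -- Sorting by the number of indices below `i` works because `r` is a total preorder.
  let rank (i : Fin c) : ℕ := #{k | r k i}
  have of_rank_le : ∀ a b, rank a ≤ rank b → r a b := by
    intro a b hab
    by_contra hab'
    have hba := (htotal a b).resolve_left hab'
    have hlt : rank b < rank a := by
      refine card_lt_card ((ssubset_iff_of_subset fun k hk => ?_).2 ⟨a, ?_, ?_⟩)
      · simp only [mem_filter, mem_univ, true_and] at hk ⊢
        exact htrans k b a hk hba
      · simpa using (htotal a a).elim id id
      · simpa using hab'
    omega
  exact ⟨Tuple.sort rank, fun i j hij => of_rank_le _ _ (Tuple.monotone_sort rank hij)⟩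

theorem restrictedDistOne_of_factorsThroughOn {n : ℕ} {B : Finset (Fin n)}
    {Q : List (Finpartition (univ : Finset (Fin n)))}
    (hQ : ∀ i j : Fin Q.length, j < i → FactorsThroughOn B (Q.get i).part (Q.get j).part) :
    RestrictedDistOne B Q := by
  intro i j hji Y hY X hX ⟨z, hz⟩ x hx
  simp only [mem_inter] at hz hx ⊢
  have hxz : (Q.get j).part x = (Q.get j).part z := by
    rw [Finpartition.part_eq_of_mem _ hX hx.1, Finpartition.part_eq_of_mem _ hX hz.1.1]
  have hx_part := (Q.get i).mem_part (mem_univ x)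
  rw [hQ i j hji x hx.2 z hz.1.2 hxz, Finpartition.part_eq_of_mem _ hY hz.2.1] at hx_part
  exact ⟨hx_part, hx.2⟩

theorem IsRefinementChainOn.exists_perm_restrictedDistOne {n c : ℕ} {B : Finset (Fin n)}
    {P : Fin c → Finpartition (univ : Finset (Fin n))}
    (hP : IsRefinementChainOn B fun i => (P i).part) :
    ∃ σ : Equiv.Perm (Fin c), RestrictedDistOne B ((List.finRange c).map fun j => P (σ j)) := by
  obtain ⟨σ, hσ⟩ := exists_perm_forall_le_imp_of_total
    (r := fun i j => FactorsThroughOn B (P j).part (P i).part) (fun i j => (hP j i))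
    (fun _ _ _ hij hjk => hjk.trans hij)
  refine ⟨σ, restrictedDistOne_of_factorsThroughOn fun i j hji => ?_⟩
  simpa using hσ ⟨j, by simpa using j.2⟩ ⟨i, by simpa using i.2⟩ (Fin.mk_le_mk.2 hji.le)

section Split

variable {α β : Type*} [LinearOrder α] [DecidableEq β] (S : Finset α) (f : α → β)

def colorRank (x : α) : ℕ := #{y ∈ S | f y = f x ∧ y < x}

def splitKey (x : α) : β ⊕ ℕ :=
  if #S ≤ #{y ∈ S | f y = f x} ^ 2 then .inl (f x) else .inr (colorRank S f x)

variable {S f}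

theorem colorRank_lt_colorRank {x y : α} (hx : x ∈ S) (hfxy : f x = f y) (hxy : x < y) :
    colorRank S f x < colorRank S f y := by
  refine card_lt_card ((ssubset_iff_of_subset fun w hw => ?_).2 ⟨x, ?_, ?_⟩)
  · simp only [mem_filter] at hw ⊢
    exact ⟨hw.1, hw.2.1.trans hfxy, hw.2.2.trans hxy⟩
  · simpa [mem_filter] using ⟨hx, hfxy, hxy⟩
  · simp

theorem colorRank_lt_card {x : α} (hx : x ∈ S) :
    colorRank S f x < #{y ∈ S | f y = f x} := by
  refine card_lt_card ((ssubset_iff_of_subset fun w hw => ?_).2 ⟨x, ?_, ?_⟩)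
  · simp only [mem_filter] at hw ⊢
    exact ⟨hw.1, hw.2.1⟩
  · simpa [mem_filter] using hx
  · simp

theorem eq_of_colorRank_eq {x y : α} (hx : x ∈ S) (hy : y ∈ S) (hfxy : f x = f y)
    (hxy : colorRank S f x = colorRank S f y) : x = y := by
  by_contra hne
  rcases lt_or_gt_of_ne hne with hlt | hlt
  · exact (colorRank_lt_colorRank hx hfxy hlt).ne hxy
  · exact (colorRank_lt_colorRank hy hfxy.symm hlt).ne hxy.symm

theorem eq_of_splitKey_eq_inl {x : α} {b : β} (h : splitKey S f x = .inl b) :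
    f x = b ∧ #S ≤ #{y ∈ S | f y = b} ^ 2 := by
  unfold splitKey at h
  split_ifs at h with hlarge
  · cases h
    exact ⟨rfl, hlarge⟩

theorem eq_of_splitKey_eq_inr {x : α} {r : ℕ} (h : splitKey S f x = .inr r) :
    colorRank S f x = r ∧ #{y ∈ S | f y = f x} ^ 2 < #S := by
  unfold splitKey at h
  split_ifs at h with hlarge
  · cases h
    exact ⟨rfl, not_le.1 hlarge⟩

theorem card_toLeft_image_splitKey_le : (#(S.image (splitKey S f)).toLeft : ℝ) ≤ √(#S : ℝ) := by
  set L := (S.image (splitKey S f)).toLeft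
  have hlarge : ∀ b ∈ L, √(#S : ℝ) ≤ #{y ∈ S | f y = b} := by
    intro b hb
    obtain ⟨x, -, hx⟩ := mem_image.1 (mem_toLeft.1 hb)
    exact (Real.sqrt_le_left (by positivity)).2 (by exact_mod_cast (eq_of_splitKey_eq_inl hx).2)
  have hsum : (#L : ℝ) * √(#S : ℝ) ≤ √(#S : ℝ) * √(#S : ℝ) := by
    rw [Real.mul_self_sqrt (Nat.cast_nonneg _)]
    calc (#L : ℝ) * √(#S : ℝ) ≤ ∑ b ∈ L, (#{y ∈ S | f y = b} : ℝ) := by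
          simpa using card_nsmul_le_sum L _ _ hlarge
      _ ≤ #S := by
          exact_mod_cast (sum_card_fiberwise_eq_card_filter S L f).trans_le (card_filter_le _ _)
  rcases (Real.sqrt_nonneg (#S : ℝ)).eq_or_lt with h0 | hpos
  · have hS : S = ∅ := by simpa using h0.symm
    simp [L, hS, Finset.toLeft]
  · exact le_of_mul_le_mul_right hsum hpos

theorem card_toRight_image_splitKey_lt (hS : S.Nonempty) :
    (#(S.image (splitKey S f)).toRight : ℝ) < √(#S : ℝ) := by
  have hsub : (S.image (splitKey S f)).toRight ⊆ range (Nat.sqrt (#S - 1)) := by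
    intro r hr
    obtain ⟨x, hx, hxr⟩ := mem_image.1 (mem_toRight.1 hr)
    obtain ⟨rfl, hsmall⟩ := eq_of_splitKey_eq_inr hxr
    have hrank := colorRank_lt_card (f := f) hx
    rw [mem_range, Nat.lt_iff_add_one_le, Nat.le_sqrt']
    calc (colorRank S f x + 1) ^ 2 ≤ #{y ∈ S | f y = f x} ^ 2 := Nat.pow_le_pow_left hrank 2
      _ ≤ #S - 1 := Nat.le_sub_one_of_lt hsmall
  have hsqrt : Nat.sqrt (#S - 1) ^ 2 < #S :=
    (Nat.sqrt_le' _).trans_lt (Nat.sub_one_lt_of_lt hS.card_pos)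
  calc (#(S.image (splitKey S f)).toRight : ℝ) ≤ Nat.sqrt (#S - 1) := by
        exact_mod_cast (card_le_card hsub).trans (card_range _).le
    _ < √(#S : ℝ) := Real.lt_sqrt_of_sq_lt (by exact_mod_cast hsqrt)

theorem card_image_splitKey_lt (hS : S.Nonempty) :
    (#(S.image (splitKey S f)) : ℝ) < 2 * √(#S : ℝ) := by
  rw [← card_toLeft_add_card_toRight, Nat.cast_add, two_mul]
  exact add_lt_add_of_le_of_lt card_toLeft_image_splitKey_le (card_toRight_image_splitKey_lt hS)

variable (f) in
theorem exists_finpartition_card_lt_two_sqrt (hS : S.Nonempty) :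
    ∃ P : Finpartition S, (#P.parts : ℝ) < 2 * √(#S : ℝ) ∧
      ∀ A ∈ P.parts, (∀ x ∈ A, ∀ y ∈ A, f x = f y) ∨ Set.InjOn f A := by
  classical
  let P := Finpartition.ofSetSetoid (Setoid.ker (splitKey S f)) S
  have hparts : P.parts = (S.image (splitKey S f)).image fun v => {y ∈ S | v = splitKey S f y} := by
    rw [Finpartition.ofSetSetoid_parts, image_image]
    congr 1
    ext a y
    simp [Setoid.ker_def]
  refine ⟨P, ?_, fun A hA => ?_⟩
  · refine lt_of_le_of_lt ?_ (card_image_splitKey_lt (f := f) hS)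
    rw [hparts]
    exact Nat.cast_le.2 card_image_le
  · rw [hparts, image_image] at hA
    obtain ⟨a, -, rfl⟩ := mem_image.1 hA
    simp only [Function.comp_apply, mem_filter, Set.InjOn, coe_filter, Set.mem_ofPred_eq]
    cases hka : splitKey S f a with
    | inl b =>
      left
      rintro x ⟨-, hx⟩ y ⟨-, hy⟩
      rw [(eq_of_splitKey_eq_inl hx.symm).1, (eq_of_splitKey_eq_inl hy.symm).1]
    | inr r =>
      right
      rintro x ⟨hxS, hx⟩ y ⟨hyS, hy⟩ hfxy
      refine eq_of_colorRank_eq hxS hyS hfxy ?_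
      rw [(eq_of_splitKey_eq_inr hx.symm).1, (eq_of_splitKey_eq_inr hy.symm).1]

end Split

section Counting

open Real

theorem sum_rpow_le_card_rpow_mul_rpow_sum {ι : Type*} (s : Finset ι) {t : ι → ℝ}
    (ht : ∀ i ∈ s, 0 ≤ t i) {a : ℝ} (ha₀ : 0 ≤ a) (ha₁ : a ≤ 1) :
    ∑ i ∈ s, t i ^ a ≤ (#s : ℝ) ^ (1 - a) * (∑ i ∈ s, t i) ^ a := by
  rcases s.eq_empty_or_nonempty with rfl | hs
  · simp only [sum_empty, card_empty, Nat.cast_zero]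
    positivity
  have hk : (0 : ℝ) < #s := by exact_mod_cast hs.card_pos
  have jensen := (concaveOn_rpow ha₀ ha₁).le_map_sum (t := s) (w := fun _ => (#s : ℝ)⁻¹) (p := t)
    (fun _ _ => by positivity) (by simp [hk.ne']) ht
  simp only [smul_eq_mul, ← mul_sum] at jensen
  rw [mul_rpow (by positivity) (sum_nonneg ht), inv_rpow hk.le] at jensen
  calc ∑ i ∈ s, t i ^ a = #s * ((#s : ℝ)⁻¹ * ∑ i ∈ s, t i ^ a) := by field_simp
    _ ≤ #s * (((#s : ℝ) ^ a)⁻¹ * (∑ i ∈ s, t i) ^ a) := by gcongr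
    _ = (#s : ℝ) ^ (1 - a) * (∑ i ∈ s, t i) ^ a := by
      rw [rpow_sub hk, rpow_one]
      ring

/-- `baseSetBound m` is the function `f (m + 1, ·)` of the paper. -/
noncomputable def baseSetBound (m : ℕ) (x : ℝ) : ℝ := 2 ^ m * x ^ ((1 : ℝ) - 1 / 2 ^ m)

theorem mul_two_mul_sqrt_rpow_le_baseSetBound_succ (m : ℕ) {x : ℝ} (hx : 0 < x) :
    2 ^ m * ((2 * √x) ^ ((1 : ℝ) / 2 ^ m) * x ^ ((1 : ℝ) - 1 / 2 ^ m)) ≤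
      baseSetBound (m + 1) x := by
  have htwo : (2 : ℝ) ^ ((1 : ℝ) / 2 ^ m) ≤ 2 := by
    refine (rpow_le_rpow_of_exponent_le one_le_two ?_).trans_eq (rpow_one 2)
    rw [div_le_one (by positivity)]
    exact one_le_pow₀ one_le_two
  calc 2 ^ m * ((2 * √x) ^ ((1 : ℝ) / 2 ^ m) * x ^ ((1 : ℝ) - 1 / 2 ^ m))
      = 2 ^ m * (2 ^ ((1 : ℝ) / 2 ^ m) * x ^ ((1 : ℝ) - 1 / 2 ^ (m + 1))) := by
        rw [mul_rpow zero_le_two (sqrt_nonneg x), sqrt_eq_rpow, ← rpow_mul hx.le, mul_assoc,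
          ← rpow_add hx, pow_succ]
        ring_nf
    _ ≤ 2 ^ m * (2 * x ^ ((1 : ℝ) - 1 / 2 ^ (m + 1))) := by gcongr
    _ = baseSetBound (m + 1) x := by rw [baseSetBound, pow_succ, mul_assoc]

theorem Finpartition.card_bind_lt_baseSetBound_succ {α : Type*} [DecidableEq α] {S : Finset α}
    {P : Finpartition S} (hP : (#P.parts : ℝ) < 2 * √(#S : ℝ)) {m : ℕ}
    {Q : ∀ A ∈ P.parts, Finpartition A} (hQ : ∀ A hA, (#(Q A hA).parts : ℝ) ≤ baseSetBound m #A) :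
    (#(P.bind Q).parts : ℝ) < baseSetBound (m + 1) #S := by
  set a : ℝ := 1 - 1 / 2 ^ m with ha
  have hcoa : 1 - a = 1 / 2 ^ m := by ring
  have hcoa_pos : 0 < 1 - a := by rw [hcoa]; positivity
  have ha₀ : 0 ≤ a := by
    rw [ha, sub_nonneg, div_le_one (by positivity)]
    exact one_le_pow₀ one_le_two
  have hS : (0 : ℝ) < #S := by
    have : 0 < √(#S : ℝ) := by linarith [(Nat.cast_nonneg #P.parts : (0 : ℝ) ≤ _)]
    exact sqrt_pos.1 this
  calc (#(P.bind Q).parts : ℝ) = ∑ A ∈ P.parts.attach, (#(Q A.1 A.2).parts : ℝ) := by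
        rw [P.card_bind]
        push_cast
        rfl
    _ ≤ ∑ A ∈ P.parts.attach, 2 ^ m * (#A.1 : ℝ) ^ a := sum_le_sum fun A _ => hQ A.1 A.2
    _ = 2 ^ m * ∑ A ∈ P.parts, (#A : ℝ) ^ a := by
        rw [← mul_sum, sum_attach P.parts fun A => (#A : ℝ) ^ a]
    _ ≤ 2 ^ m * ((#P.parts : ℝ) ^ (1 - a) * (∑ A ∈ P.parts, (#A : ℝ)) ^ a) := by
        gcongr
        exact sum_rpow_le_card_rpow_mul_rpow_sum _ (fun _ _ => Nat.cast_nonneg _) ha₀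
          (by linarith)
    _ = 2 ^ m * ((#P.parts : ℝ) ^ (1 - a) * (#S : ℝ) ^ a) := by
        rw [← Nat.cast_sum, P.sum_card_parts]
    _ < 2 ^ m * ((2 * √(#S : ℝ)) ^ (1 - a) * (#S : ℝ) ^ a) := by
        gcongr
    _ ≤ baseSetBound (m + 1) #S := by
        rw [hcoa]
        exact mul_two_mul_sqrt_rpow_le_baseSetBound_succ m hS

end Counting

section Induction

variable {α β : Type*} [LinearOrder α] [DecidableEq β]

theorem exists_finpartition_card_lt_of_forall_le {m : ℕ} {S : Finset α} (hS : S.Nonempty)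
    (g : Fin (m + 2) → α → β)
    (ih : ∀ A : Finset α, A.Nonempty → ∃ D : Finpartition A, (#D.parts : ℝ) ≤ baseSetBound m #A ∧
      ∀ B ∈ D.parts, IsRefinementChainOn B fun i : Fin (m + 1) => g i.succ) :
    ∃ D : Finpartition S, (#D.parts : ℝ) < baseSetBound (m + 1) #S ∧
      ∀ B ∈ D.parts, IsRefinementChainOn B g := by
  obtain ⟨P, hPcard, hPsplit⟩ := exists_finpartition_card_lt_two_sqrt (g 0) hS
  choose Q hQcard hQchain using fun A (hA : A ∈ P.parts) => ih A (P.nonempty_of_mem_parts hA)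
  refine ⟨P.bind Q, P.card_bind_lt_baseSetBound_succ hPcard hQcard, fun B hB => ?_⟩
  obtain ⟨A, hA, hBA⟩ := P.mem_bind.1 hB
  have hBA' : B ⊆ A := (Q A hA).le hBA
  exact (hQchain A hA B hBA).fin_cons ((hPsplit A hA).imp
    (fun hconst x hx y hy => hconst x (hBA' hx) y (hBA' hy)) (·.mono hBA'))

theorem exists_finpartition_card_le_baseSetBound (m : ℕ) {S : Finset α} (hS : S.Nonempty)
    (g : Fin (m + 1) → α → β) :
    ∃ D : Finpartition S, (#D.parts : ℝ) ≤ baseSetBound m #S ∧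
      ∀ B ∈ D.parts, IsRefinementChainOn B g := by
  induction m generalizing S with
  | zero =>
    exact ⟨.indiscrete hS.ne_empty, by simp [baseSetBound],
      fun B _ => isRefinementChainOn_fin_one B g⟩
  | succ m ih =>
    obtain ⟨D, hD, hchain⟩ := exists_finpartition_card_lt_of_forall_le hS g fun A hA => ih hA _
    exact ⟨D, hD.le, hchain⟩

end Induction

/-- For any `c ≥ 2` partitions of `[n]` there is a partition of `[n]` into
fewer than `2^{c-1} n^{1-1/2^{c-1}}` base sets such that on each base set some
permutation of the given partitions has distance 1. -/
theorem stmt16 (n c : ℕ) (hn : 0 < n) (hc : 2 ≤ c)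
    (P : Fin c → Finpartition (Finset.univ : Finset (Fin n))) :
    ∃ B : Finpartition (Finset.univ : Finset (Fin n)),
      (B.parts.card : ℝ) < 2 ^ (c - 1) * (n : ℝ) ^ ((1 : ℝ) - 1 / 2 ^ (c - 1)) ∧
      ∀ Bi ∈ B.parts, ∃ σ : Equiv.Perm (Fin c),
        RestrictedDistOne Bi ((List.finRange c).map (fun j => P (σ j))) := by
  obtain ⟨m, rfl⟩ : ∃ m, c = m + 2 := ⟨c - 2, by omega⟩
  obtain ⟨D, hcard, hchain⟩ := exists_finpartition_card_lt_of_forall_le ⟨⟨0, hn⟩, mem_univ _⟩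
    (fun i => (P i).part) fun A hA => exists_finpartition_card_le_baseSetBound m hA _
  exact ⟨D, by simpa [baseSetBound] using hcard,
    fun B hB => (hchain B hB).exists_perm_restrictedDistOne⟩
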